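/- Let f : M → N be a smooth map between compact smooth manifolds and let E be a smooth complex vector bundle of finite rank over N. Regard C^∞(M,ℂ) as an algebra over C^∞(N,ℂ) via precomposition with f. Then the C^∞(M,ℂ)-linear map C^∞(M,ℂ) ⊗_{C^∞(N,ℂ)} Γ^∞(E) → Γ^∞(f*E) determined by g ⊗ s ↦ (x ↦ g(x)·s(f(x))) is a bijection (an isomorphism of C^∞(M,ℂ)-modules). -/

import Mathlib

/-!
Since `N` is compact, there are finitely many trivializations `eᵢ` of `E` and smooth functions
`ρᵢ, σᵢ` supported in their base sets with `∑ σᵢ ρᵢ = 1`. With a basis `(bⱼ)` of the fibre they give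
global sections `sᵢⱼ = ρᵢ • eᵢ⁻¹ bⱼ` of `E` and coefficients `cᵢⱼ s = σᵢ • bⱼ*(eᵢ s)` in `C^∞(N)`
with `s = ∑ cᵢⱼ s • sᵢⱼ`, so `Γ(E)` is a direct summand of a finite free module. The same formulas
along `f` give `C^∞(M)`-linear `c'ᵢⱼ` on `Γ(f*E)` with `t = ∑ c'ᵢⱼ t • f*sᵢⱼ` and
`c'ᵢⱼ (f*s) = cᵢⱼ s ∘ f`, which make `t ↦ ∑ c'ᵢⱼ t ⊗ sᵢⱼ` inverse to `g ⊗ s ↦ g • f*s`.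
-/

open Bundle Manifold
open scoped TensorProduct

local notation "∞" => (⊤ : ℕ∞)

noncomputable section

/-- Complex multiplication and addition are smooth over `ℝ`, so that the complex-valued smooth
functions on a real manifold form a (comm)ring. -/
instance : ContMDiffRing 𝓘(ℝ, ℂ) ∞ ℂ where
  contMDiff_add := by
    rw [contMDiff_iff]
    refine ⟨continuous_add, fun x y => ?_⟩
    simp only [mfld_simps]
    exact contDiff_add.contDiffOn
  contMDiff_mul := by
    rw [contMDiff_iff]
    refine ⟨continuous_mul, fun x y => ?_⟩
    simp only [mfld_simps]
    exact contDiff_mul.contDiffOn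

variable {EM : Type*} [NormedAddCommGroup EM] [NormedSpace ℝ EM] [FiniteDimensional ℝ EM]
  {HM : Type*} [TopologicalSpace HM] {IM : ModelWithCorners ℝ EM HM}
  {M : Type*} [TopologicalSpace M] [ChartedSpace HM M] [IsManifold IM ∞ M]
  [T2Space M] [SecondCountableTopology M] [CompactSpace M]

variable {EN : Type*} [NormedAddCommGroup EN] [NormedSpace ℝ EN] [FiniteDimensional ℝ EN]
  {HN : Type*} [TopologicalSpace HN] {IN : ModelWithCorners ℝ EN HN}
  {N : Type*} [TopologicalSpace N] [ChartedSpace HN N] [IsManifold IN ∞ N]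
  [T2Space N] [SecondCountableTopology N] [CompactSpace N]

/-- The constant functions make the smooth complex-valued functions a `ℂ`-algebra. -/
instance : Algebra ℂ C^∞⟮IM, M; 𝓘(ℝ, ℂ), ℂ⟯ :=
  RingHom.toAlgebra
    { toFun := fun c => ⟨fun _ => c, contMDiff_const⟩
      map_one' := rfl
      map_mul' := fun _ _ => rfl
      map_zero' := rfl
      map_add' := fun _ _ => rfl }

section SectionsModule

variable {EB : Type*} [NormedAddCommGroup EB] [NormedSpace ℝ EB]
  {HB : Type*} [TopologicalSpace HB] {IB : ModelWithCorners ℝ EB HB}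
  {B : Type*} [TopologicalSpace B] [ChartedSpace HB B] [IsManifold IB ∞ B]
  {FB : Type*} [NormedAddCommGroup FB] [NormedSpace ℂ FB]
  {VB : B → Type*} [TopologicalSpace (TotalSpace FB VB)]
  [∀ x, AddCommGroup (VB x)] [∀ x, Module ℂ (VB x)] [∀ x, TopologicalSpace (VB x)]
  [FiberBundle FB VB] [VectorBundle ℂ FB VB] [VectorBundle ℝ FB VB] [ContMDiffVectorBundle ∞ FB VB IB]

/-- Pointwise scalar multiplication of a smooth section by a smooth function. -/
instance ContMDiffSection.instSMulSmoothMap :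
    SMul C^∞⟮IB, B; 𝓘(ℝ, ℂ), ℂ⟯ Cₛ^∞⟮IB; FB, VB⟯ := by
  refine ⟨fun f s => ⟨fun x => f x • s x, ?_⟩⟩
  intro x₀
  have hs := s.contMDiff x₀
  have hf : ContMDiffAt IB 𝓘(ℝ, ℂ) ∞ f x₀ := f.contMDiff x₀
  rw [contMDiffAt_section] at hs ⊢
  set e := trivializationAt FB VB x₀
  have h1 : ContMDiffAt IB 𝓘(ℝ, FB →L[ℝ] FB) ∞
      (fun x => (ContinuousLinearMap.lsmul ℝ ℂ (f x) : FB →L[ℝ] FB)) x₀ :=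
    ContDiff.comp_contMDiffAt
      (g := ⇑(ContinuousLinearMap.lsmul ℝ ℂ : ℂ →L[ℝ] FB →L[ℝ] FB))
      (ContinuousLinearMap.contDiff _) hf
  refine (h1.clm_apply hs).congr_of_eventuallyEq ?_
  refine Filter.eventually_of_mem
    (e.open_baseSet.mem_nhds <| mem_baseSet_trivializationAt FB VB x₀) ?_
  intro x hx
  simp only [ContinuousLinearMap.lsmul_apply]
  exact (e.linear ℂ hx).2 (f x) (s x)

set_option linter.unusedSectionVars false in
@[simp]
theorem ContMDiffSection.coe_smul_smoothMap (f : C^∞⟮IB, B; 𝓘(ℝ, ℂ), ℂ⟯)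
    (s : Cₛ^∞⟮IB; FB, VB⟯) (x : B) : (f • s) x = f x • s x :=
  rfl

/-- The smooth sections of a smooth complex vector bundle form a module over the algebra of
smooth complex-valued functions on the base. -/
instance ContMDiffSection.instModuleSmoothMap :
    Module C^∞⟮IB, B; 𝓘(ℝ, ℂ), ℂ⟯ Cₛ^∞⟮IB; FB, VB⟯ where
  one_smul s := ContMDiffSection.ext fun x => one_smul ℂ (s x)
  mul_smul f g s := ContMDiffSection.ext fun x => mul_smul (f x) (g x) (s x)
  smul_zero f := ContMDiffSection.ext fun x => smul_zero (f x)
  smul_add f s t := ContMDiffSection.ext fun x => smul_add (f x) (s x) (t x)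
  add_smul f g s := ContMDiffSection.ext fun x => add_smul (f x) (g x) (s x)
  zero_smul s := ContMDiffSection.ext fun x => zero_smul ℂ (s x)

end SectionsModule

variable {F : Type*} [NormedAddCommGroup F] [NormedSpace ℂ F] [FiniteDimensional ℂ F]
  {V : N → Type*} [TopologicalSpace (TotalSpace F V)]
  [∀ y, AddCommGroup (V y)] [∀ y, Module ℂ (V y)] [∀ y, TopologicalSpace (V y)]
  [FiberBundle F V] [VectorBundle ℂ F V] [VectorBundle ℝ F V] [ContMDiffVectorBundle ∞ F V IN]

attribute [-instance] instAddCommMonoidPullback instModulePullback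

instance instPullbackFiberAddCommGroup {f : M → N} (x : M) : AddCommGroup ((f *ᵖ V) x) :=
  inferInstanceAs (AddCommGroup (V (f x)))

instance instPullbackFiberModuleComplex {f : M → N} (x : M) : Module ℂ ((f *ᵖ V) x) :=
  inferInstanceAs (Module ℂ (V (f x)))

instance instPullbackFiberModuleReal {f : M → N} (x : M) : Module ℝ ((f *ᵖ V) x) :=
  inferInstanceAs (Module ℝ (V (f x)))

instance instPullbackVectorBundleReal (f : C^∞⟮IM, M; IN, N⟯) :
    VectorBundle ℝ F (⇑f *ᵖ V) := by
  exact VectorBundle.pullback (𝕜 := ℝ) (F := F) (E := V) f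

instance instPullbackVectorBundleComplex (f : C^∞⟮IM, M; IN, N⟯) :
    VectorBundle ℂ F (⇑f *ᵖ V) := by
  exact VectorBundle.pullback (𝕜 := ℂ) (F := F) (E := V) f

instance instPullbackSmoothVectorBundle (f : C^∞⟮IM, M; IN, N⟯) :
    ContMDiffVectorBundle ∞ F (⇑f *ᵖ V) IM := by
  exact ContMDiffVectorBundle.pullback F V IM f

section BaseChange

variable {R A P Q ι : Type*} [CommSemiring R] [CommSemiring A] [Algebra R A] [AddCommMonoid P]
  [Module R P] [AddCommMonoid Q] [Module A Q] [Fintype ι]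

theorem LinearMap.liftBaseChange_bijective_of_sum_smul_eq [Module R Q] [IsScalarTower R A Q]
    (l : P →ₗ[R] Q) (s : ι → P) (c : ι → P → R) (c' : ι → Q →ₗ[A] A)
    (hc : ∀ p, ∑ i, c i p • s i = p) (hc' : ∀ q, ∑ i, c' i q • l (s i) = q)
    (hcompat : ∀ i p, c' i (l p) = algebraMap R A (c i p)) :
    Function.Bijective (l.liftBaseChange A) := by
  let S : Q →ₗ[A] A ⊗[R] P := ∑ i, (c' i).smulRight ((1 : A) ⊗ₜ s i)
  have hST : S ∘ₗ l.liftBaseChange A = .id := by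
    refine TensorProduct.AlgebraTensorModule.ext fun a p => ?_
    calc S (a • l p) = ∑ i, (c i p • a) ⊗ₜ s i := by
          simp [S, hcompat, Finset.smul_sum, TensorProduct.smul_tmul', Algebra.smul_def, mul_comm]
      _ = a ⊗ₜ p := by simp_rw [TensorProduct.smul_tmul, ← TensorProduct.tmul_sum, hc]
  have hTS : l.liftBaseChange A ∘ₗ S = .id := by
    ext q
    simp [S, hc']
  exact Function.bijective_iff_has_inverse.mpr
    ⟨S, LinearMap.congr_fun hST, LinearMap.congr_fun hTS⟩

theorem AddMonoidHom.exists_liftBaseChange_bijective_of_sum_smul_eq (l : P →+ Q)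
    (hl : ∀ (r : R) p, l (r • p) = algebraMap R A r • l p) (s : ι → P) (c : ι → P → R)
    (c' : ι → Q →ₗ[A] A) (hc : ∀ p, ∑ i, c i p • s i = p) (hc' : ∀ q, ∑ i, c' i q • l (s i) = q)
    (hcompat : ∀ i p, c' i (l p) = algebraMap R A (c i p)) :
    ∃ T : A ⊗[R] P →ₗ[A] Q, (∀ a p, T (a ⊗ₜ p) = a • l p) ∧ Function.Bijective T := by
  let _ : Module R Q := Module.compHom Q (algebraMap R A)
  have : IsScalarTower R A Q := .of_algebraMap_smul fun _ _ => rfl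
  let lR : P →ₗ[R] Q := { l with map_smul' := hl }
  exact ⟨lR.liftBaseChange A, fun _ _ => rfl,
    lR.liftBaseChange_bijective_of_sum_smul_eq s c c' hc hc' hcompat⟩

end BaseChange

@[simp]
theorem ContMDiffSection.finset_sum_apply {𝕜 : Type*} [NontriviallyNormedField 𝕜]
    {EB : Type*} [NormedAddCommGroup EB] [NormedSpace 𝕜 EB] {HB : Type*} [TopologicalSpace HB]
    {IB : ModelWithCorners 𝕜 EB HB} {B : Type*} [TopologicalSpace B] [ChartedSpace HB B]
    {FB : Type*} [NormedAddCommGroup FB] [NormedSpace 𝕜 FB] {n : WithTop ℕ∞} {VB : B → Type*}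
    [TopologicalSpace (TotalSpace FB VB)] [∀ x, AddCommGroup (VB x)] [∀ x, Module 𝕜 (VB x)]
    [∀ x, TopologicalSpace (VB x)] [FiberBundle FB VB] [VectorBundle 𝕜 FB VB]
    [ContMDiffVectorBundle n FB VB IB] {ι : Type*} (s : Finset ι) (t : ι → Cₛ^n⟮IB; FB, VB⟯)
    (x : B) : (∑ i ∈ s, t i) x = ∑ i ∈ s, t i x := by
  rw [← ContMDiffSection.coeAddHom_apply, map_sum, Finset.sum_apply]
  rfl

open Set Function

section CutOff

variable {EB : Type*} [NormedAddCommGroup EB] [NormedSpace ℝ EB]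
  {HB : Type*} [TopologicalSpace HB] {IB : ModelWithCorners ℝ EB HB}
  {B : Type*} [TopologicalSpace B] [ChartedSpace HB B]

theorem exists_smooth_sum_mul_eq_one [FiniteDimensional ℝ EB] [IsManifold IB ∞ B] [T2Space B]
    [CompactSpace B] {ι : Type*} (U : ι → Set B) (hU : ∀ i, IsOpen (U i))
    (hcover : ∀ y, ∃ i, y ∈ U i) :
    ∃ (J : Finset ι) (ρ σ : ι → C^∞⟮IB, B; 𝓘(ℝ), ℝ⟯), (∀ i, tsupport (ρ i) ⊆ U i) ∧
      (∀ i, tsupport (σ i) ⊆ U i) ∧ ∀ y, ∑ i : J, σ i y * ρ i y = 1 := by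
  obtain ⟨ρ, hρU⟩ := SmoothPartitionOfUnity.exists_isSubordinate IB isClosed_univ U hU
    fun y _ => mem_iUnion.mpr (hcover y)
  let J := ρ.locallyFinite.finite_nonempty_of_compact.toFinset
  have hsum (y : B) : ∑ i ∈ J, ρ i y = 1 := by
    rw [← finsum_eq_sum_of_support_subset _ fun i hi => ?_]
    · exact ρ.sum_eq_one (mem_univ y)
    · exact (Set.Finite.mem_toFinset _).mpr ⟨y, hi⟩
  -- `σ i = ρ i / ∑ j, ρ j ^ 2` vanishes where `ρ i` does, and `∑ i, σ i * ρ i = 1`.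
  let G : B → ℝ := fun y => ∑ i ∈ J, ρ i y * ρ i y
  have hG : ContMDiff IB 𝓘(ℝ) ∞ G :=
    contMDiff_finsetSum fun i _ => (ρ i).contMDiff.mul (ρ i).contMDiff
  have hG0 (y : B) : G y ≠ 0 := by
    obtain ⟨i, hiJ, hi⟩ := Finset.exists_ne_zero_of_sum_ne_zero ((hsum y).trans_ne one_ne_zero)
    exact (Finset.sum_pos' (fun j _ => mul_self_nonneg (ρ j y)) ⟨i, hiJ, mul_self_pos.mpr hi⟩).ne'
  refine ⟨J, fun i => ρ i, fun i => ⟨fun y => ρ i y * (G y)⁻¹, (ρ i).contMDiff.mul (hG.inv₀ hG0)⟩,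
    hρU, fun i => tsupport_mul_subset_left.trans (hρU i), fun y => ?_⟩
  show ∑ i : J, ρ i y * (G y)⁻¹ * ρ i y = 1
  simp_rw [mul_right_comm _ (G y)⁻¹, ← Finset.sum_mul,
    Finset.sum_coe_sort J (fun i => ρ i y * ρ i y)]
  exact mul_inv_cancel₀ (hG0 y)

variable {FB : Type*} [NormedAddCommGroup FB] [NormedSpace ℂ FB]
  {VB : B → Type*} [TopologicalSpace (TotalSpace FB VB)]
  [∀ x, AddCommGroup (VB x)] [∀ x, Module ℂ (VB x)]

namespace Bundle.Trivialization

variable (e : Trivialization FB (π FB VB))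

theorem sum_repr_linearMapAt_smul_symm [e.IsLinear ℂ] {κ : Type*} [Fintype κ]
    (b : Module.Basis κ ℂ FB) {y : B} (hy : y ∈ e.baseSet) (v : VB y) :
    ∑ j, b.repr (e.linearMapAt ℂ y v) j • e.symm y (b j) = v := by
  simp_rw [← e.symmₗ_apply (R := ℂ) hy, ← map_smul, ← map_sum, b.sum_repr,
    e.symmₗ_linearMapAt hy]

theorem sum_smul_repr_linearMapAt_smul_smul_symm {ι κ : Type*} [Fintype ι] [Fintype κ]
    (e : ι → Trivialization FB (π FB VB)) [∀ i, (e i).IsLinear ℂ] (b : Module.Basis κ ℂ FB)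
    (ρ σ : ι → B → ℝ) (hρ : ∀ i, support (ρ i) ⊆ (e i).baseSet) {y : B}
    (hy : ∑ i, σ i y * ρ i y = 1) (v : VB y) :
    ∑ a : ι × κ,
      (σ a.1 y • b.repr ((e a.1).linearMapAt ℂ y v) a.2) • ρ a.1 y • (e a.1).symm y (b a.2)
      = v := by
  have hterm (i : ι) :
      ∑ j, (σ i y • b.repr ((e i).linearMapAt ℂ y v) j) • ρ i y • (e i).symm y (b j)
        = (σ i y * ρ i y) • v := by
    by_cases hyi : y ∈ (e i).baseSet
    · simp_rw [smul_comm _ (ρ i y), smul_assoc, ← Finset.smul_sum,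
        (e i).sum_repr_linearMapAt_smul_symm b hyi, smul_smul, mul_comm]
    · simp [notMem_support.mp fun h => hyi (hρ i h)]
  rw [Fintype.sum_prod_type, Finset.sum_congr rfl fun i _ => hterm i, ← Finset.sum_smul, hy,
    one_smul]

variable [∀ x, TopologicalSpace (VB x)] [FiberBundle FB VB] [MemTrivializationAtlas e]
  [VectorBundle ℝ FB VB] [ContMDiffVectorBundle ∞ FB VB IB]

def cutoffSection (ρ : C^∞⟮IB, B; 𝓘(ℝ), ℝ⟯) (hρ : tsupport ρ ⊆ e.baseSet) (v : FB) :
    Cₛ^∞⟮IB; FB, VB⟯ :=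
  ⟨fun y => ρ y • e.symm y v, by
    refine ContMDiffOn.smul_section_of_tsupport ρ.contMDiff.contMDiffOn e.open_baseSet hρ ?_
    rw [e.contMDiffOn_section_baseSet_iff]
    exact (contMDiffOn_const (c := v)).congr fun y hy => by simp [e.apply_mk_symm hy]⟩

@[simp]
theorem cutoffSection_apply (ρ : C^∞⟮IB, B; 𝓘(ℝ), ℝ⟯) (hρ : tsupport ρ ⊆ e.baseSet) (v : FB)
    (y : B) : e.cutoffSection ρ hρ v y = ρ y • e.symm y v :=
  rfl

variable [FiniteDimensional ℂ FB] [VectorBundle ℂ FB VB]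

/-- `linearMapAt` is `0` off `e.baseSet`, where `σ` vanishes anyway; unlike `(e ⟨y, t y⟩).2` it
is linear at every point, which makes the coefficient linear in `t`. -/
def cutoffCoeff (σ : C^∞⟮IB, B; 𝓘(ℝ), ℝ⟯) (hσ : tsupport σ ⊆ e.baseSet) (φ : FB →ₗ[ℂ] ℂ)
    (t : Cₛ^∞⟮IB; FB, VB⟯) : C^∞⟮IB, B; 𝓘(ℝ, ℂ), ℂ⟯ :=
  ⟨fun y => σ y • φ (e.linearMapAt ℂ y (t y)), by
    let φℝ : FB →L[ℝ] ℂ := ⟨φ.restrictScalars ℝ, φ.continuous_of_finiteDimensional⟩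
    have hφt : ContMDiffOn IB 𝓘(ℝ, ℂ) ∞ (fun y => φℝ (e ⟨y, t y⟩).2) e.baseSet :=
      φℝ.contMDiff.comp_contMDiffOn (e.contMDiffOn_section_baseSet_iff.mp t.contMDiff.contMDiffOn)
    refine contMDiff_of_tsupport fun y hy => ?_
    have hy : y ∈ e.baseSet := hσ (tsupport_smul_subset_left _ _ hy)
    refine ((σ.contMDiff.contMDiffOn.smul hφt).contMDiffAt
      (e.open_baseSet.mem_nhds hy)).congr_of_eventuallyEq ?_
    filter_upwards [e.open_baseSet.mem_nhds hy] with z hz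
    rw [e.coe_linearMapAt_of_mem hz]
    rfl⟩

@[simp]
theorem cutoffCoeff_apply (σ : C^∞⟮IB, B; 𝓘(ℝ), ℝ⟯) (hσ : tsupport σ ⊆ e.baseSet)
    (φ : FB →ₗ[ℂ] ℂ) (t : Cₛ^∞⟮IB; FB, VB⟯) (y : B) :
    e.cutoffCoeff σ hσ φ t y = σ y • φ (e.linearMapAt ℂ y (t y)) :=
  rfl

def cutoffCoeffₗ (σ : C^∞⟮IB, B; 𝓘(ℝ), ℝ⟯) (hσ : tsupport σ ⊆ e.baseSet) (φ : FB →ₗ[ℂ] ℂ) :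
    Cₛ^∞⟮IB; FB, VB⟯ →ₗ[C^∞⟮IB, B; 𝓘(ℝ, ℂ), ℂ⟯] C^∞⟮IB, B; 𝓘(ℝ, ℂ), ℂ⟯ where
  toFun := e.cutoffCoeff σ hσ φ
  map_add' t t' := by ext y; simp [ContMDiffMap.coe_add, smul_add]
  map_smul' g t := by
    ext y
    show σ y • φ (e.linearMapAt ℂ y (g y • t y)) = g y * (σ y • φ (e.linearMapAt ℂ y (t y)))
    simp [mul_left_comm]

@[simp]
theorem cutoffCoeffₗ_apply (σ : C^∞⟮IB, B; 𝓘(ℝ), ℝ⟯) (hσ : tsupport σ ⊆ e.baseSet)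
    (φ : FB →ₗ[ℂ] ℂ) (t : Cₛ^∞⟮IB; FB, VB⟯) : e.cutoffCoeffₗ σ hσ φ t = e.cutoffCoeff σ hσ φ t :=
  rfl

end Bundle.Trivialization

end CutOff

section Pullback

variable {EB : Type*} [NormedAddCommGroup EB] [NormedSpace ℝ EB]
  {HB : Type*} [TopologicalSpace HB] {IB : ModelWithCorners ℝ EB HB}
  {B : Type*} [TopologicalSpace B] [ChartedSpace HB B]
  {EB' : Type*} [NormedAddCommGroup EB'] [NormedSpace ℝ EB']
  {HB' : Type*} [TopologicalSpace HB'] {IB' : ModelWithCorners ℝ EB' HB'}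
  {B' : Type*} [TopologicalSpace B'] [ChartedSpace HB' B']
  {FB : Type*} [NormedAddCommGroup FB] [NormedSpace ℂ FB]
  {VB : B → Type*} [TopologicalSpace (TotalSpace FB VB)]
  [∀ x, AddCommGroup (VB x)] [∀ x, TopologicalSpace (VB x)] [FiberBundle FB VB]
  (f : C^∞⟮IB', B'; IB, B⟯)

instance Bundle.Trivialization.memTrivializationAtlas_pullback (e : Trivialization FB (π FB VB))
    [MemTrivializationAtlas e] : MemTrivializationAtlas (e.pullback f) :=
  ⟨⟨e, inferInstance, rfl⟩⟩

def ContMDiffSection.pullback (s : Cₛ^∞⟮IB; FB, VB⟯) : Cₛ^∞⟮IB'; FB, f *ᵖ VB⟯ :=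
  ⟨fun x => s (f x), fun x => by
    have hs := s.contMDiff (f x)
    rw [contMDiffAt_section] at hs
    exact (contMDiffAt_section (E := ⇑f *ᵖ VB) (s := fun x => s (f x)) x).mpr
      (hs.comp x (f.contMDiff x))⟩

theorem Bundle.Trivialization.linearMapAt_pullback [∀ x, Module ℂ (VB x)] [VectorBundle ℂ FB VB]
    (e : Trivialization FB (π FB VB)) [MemTrivializationAtlas e] (x : B') (v : (f *ᵖ VB) x) :
    (e.pullback f).linearMapAt ℂ x v = e.linearMapAt ℂ (f x) v := by
  simp only [Trivialization.coe_linearMapAt]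
  rfl

end Pullback

/-- For a smooth map `f : M → N` between compact manifolds and a smooth complex vector bundle `E`
over `N`, pulling back sections induces an isomorphism
`C^∞(M,ℂ) ⊗_{C^∞(N,ℂ)} Γ^∞(E) ≅ Γ^∞(f*E)` of modules over `C^∞(M,ℂ)`, where `C^∞(M,ℂ)` is a
`C^∞(N,ℂ)`-algebra via precomposition with `f`. -/
theorem pullback_sections_tensor_equiv (f : C^∞⟮IM, M; IN, N⟯)
    [Algebra C^∞⟮IN, N; 𝓘(ℝ, ℂ), ℂ⟯ C^∞⟮IM, M; 𝓘(ℝ, ℂ), ℂ⟯]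
    (halg : ∀ (h : C^∞⟮IN, N; 𝓘(ℝ, ℂ), ℂ⟯) (x : M),
      algebraMap C^∞⟮IN, N; 𝓘(ℝ, ℂ), ℂ⟯ C^∞⟮IM, M; 𝓘(ℝ, ℂ), ℂ⟯ h x = h (f x)) :
    ∃ T : (C^∞⟮IM, M; 𝓘(ℝ, ℂ), ℂ⟯ ⊗[C^∞⟮IN, N; 𝓘(ℝ, ℂ), ℂ⟯] Cₛ^∞⟮IN; F, V⟯)
        →ₗ[C^∞⟮IM, M; 𝓘(ℝ, ℂ), ℂ⟯] Cₛ^∞⟮IM; F, f *ᵖ V⟯,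
      (∀ (g : C^∞⟮IM, M; 𝓘(ℝ, ℂ), ℂ⟯) (s : Cₛ^∞⟮IN; F, V⟯) (x : M),
        T (g ⊗ₜ s) x = g x • s (f x)) ∧ Function.Bijective T := by
  obtain ⟨J, ρ, σ, hρ, hσ, hσρ⟩ := exists_smooth_sum_mul_eq_one (IB := IN)
    (fun y : N => (trivializationAt F V y).baseSet) (fun y => (trivializationAt F V y).open_baseSet)
    fun y => ⟨y, mem_baseSet_trivializationAt F V y⟩
  let e : J → Trivialization F (π F V) := fun i => trivializationAt F V i
  let b := Module.finBasis ℂ F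
  have key (y : N) (v : V y) := Trivialization.sum_smul_repr_linearMapAt_smul_smul_symm e b
    (fun i => ρ i) (fun i => σ i) (fun i => (subset_tsupport _).trans (hρ i)) (hσρ y) v
  let l : Cₛ^∞⟮IN; F, V⟯ →+ Cₛ^∞⟮IM; F, f *ᵖ V⟯ :=
    ⟨⟨ContMDiffSection.pullback f, rfl⟩, fun _ _ => rfl⟩
  have hl (s : Cₛ^∞⟮IN; F, V⟯) (x : M) : l s x = s (f x) := rfl
  have hσf (i : J) : tsupport ((σ i).comp f) ⊆ ((e i).pullback f).baseSet :=
    (tsupport_comp_subset_preimage _ f.contMDiff.continuous).trans (preimage_mono (hσ i))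
  obtain ⟨T, hT, hbij⟩ := l.exists_liftBaseChange_bijective_of_sum_smul_eq
    (fun h s => ContMDiffSection.ext fun x => by exact congrArg (· • s (f x)) (halg h x).symm)
    (fun a : J × _ => (e a.1).cutoffSection (ρ a.1) (hρ a.1) (b a.2))
    (fun a => (e a.1).cutoffCoeff (σ a.1) (hσ a.1) (b.coord a.2))
    (fun a => ((e a.1).pullback f).cutoffCoeffₗ ((σ a.1).comp f) (hσf a.1) (b.coord a.2))
    (fun p => ContMDiffSection.ext fun y => by simpa using key y (p y))
    (fun q => ContMDiffSection.ext fun x => by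
      have := key (f x) (q x)
      simp [hl, Trivialization.linearMapAt_pullback] at this ⊢
      exact this)
    (fun a p => ContMDiffMap.ext fun x => by
      simp [hl, halg, (e a.1).linearMapAt_pullback f x (p (f x))])
  exact ⟨T, fun g s x => congrArg (· x) (hT g s), hbij⟩
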